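/- Let M ≥ 3 be an integer and let η ∈ ℝ, ϑ ∈ (−π/2, π/2) with cos ϑ > 2/M. Consider the azimuth cut φ ↦ f(φ, ϑ; η, ϑ) of the sUPA array factor. Then f(η + arcsin(2/(M·cos ϑ)), ϑ; η, ϑ) = 0 and f(η − arcsin(2/(M·cos ϑ)), ϑ; η, ϑ) = 0, while f(φ, ϑ; η, ϑ) ≠ 0 for every φ with |φ − η| < arcsin(2/(M·cos ϑ)). Consequently the null-to-null azimuth beamwidth of the main lobe equals 2·arcsin(2/(M·cos ϑ)). -/

import Mathlib

open Real Complex Finset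

/-- The Dirichlet kernel `H_M(x) = (1/M) ∑_{m=0}^{M-1} exp(iπ m x)`. -/
noncomputable def dirichletKernel (M : ℕ) (x : ℝ) : ℂ :=
  (1 / (M : ℂ)) * ∑ m ∈ Finset.range M, Complex.exp (Complex.I * (Real.pi : ℂ) * (m : ℂ) * (x : ℂ))

/-- The sUPA array factor
`f(φ,θ;η,ϑ) = M² H_M(cos θ sin(φ−η)) H_M(sin θ cos ϑ − cos θ sin ϑ cos(φ−η))`. -/
noncomputable def sUPAFactor (M : ℕ) (φ θ η ϑ : ℝ) : ℂ :=
  (M : ℂ) ^ 2 * dirichletKernel M (Real.cos θ * Real.sin (φ - η)) *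
    dirichletKernel M (Real.sin θ * Real.cos ϑ - Real.cos θ * Real.sin ϑ * Real.cos (φ - η))

/-!
`H_M(x)` is a geometric sum in `q = exp(iπx)`, so for `q ≠ 1` it equals `(q^M - 1) / (M (q - 1))`
and vanishes exactly when `Mx ∈ 2ℤ` but `x ∉ 2ℤ`; in particular its zeros closest to `0` are
`±2/M`. On the azimuth cut `θ = ϑ` the two arguments of the kernels are `cos ϑ sin δ` and
`sin ϑ cos ϑ (1 - cos δ)` with `δ = φ - η`, and for `|δ| ≤ π/2` the second is bounded in absolute
value by the first, since `1 - cos δ ≤ sin² δ ≤ |sin δ|`. Hence the first factor alone decides: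
it vanishes when `cos ϑ sin δ = ±2/M`, i.e. at `δ = ±arcsin(2/(M cos ϑ))`, and neither factor
vanishes strictly in between.
-/

lemma exp_I_pi_mul_pow (x : ℝ) (M : ℕ) :
    Complex.exp (I * π * x) ^ M = Complex.exp (I * π * ((M * x : ℝ) : ℂ)) := by
  rw [← Complex.exp_nat_mul]
  push_cast
  ring_nf

lemma exp_I_pi_mul_ne_one {x : ℝ} (hx0 : x ≠ 0) (hx2 : |x| < 2) :
    Complex.exp (I * π * x) ≠ 1 := by
  rw [Ne, Complex.exp_eq_one_iff]
  rintro ⟨n, hn⟩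
  have hx : x = 2 * n := by
    have hI : I * (π : ℂ) ≠ 0 := mul_ne_zero I_ne_zero (ofReal_ne_zero.mpr pi_ne_zero)
    have hx' : (x : ℂ) = 2 * n := mul_left_cancel₀ hI (by linear_combination hn)
    exact_mod_cast hx'
  have hn0 : n = 0 := by
    rw [← Int.abs_lt_one_iff, ← Int.cast_lt (R := ℝ), Int.cast_abs]
    rw [hx, abs_mul, abs_two] at hx2
    push_cast
    linarith
  exact hx0 (by simp [hx, hn0])

lemma dirichletKernel_eq_geom_sum (M : ℕ) (x : ℝ) :
    dirichletKernel M x = (M : ℂ)⁻¹ * ∑ m ∈ range M, Complex.exp (I * π * x) ^ m := by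
  rw [dirichletKernel, one_div]
  congr 1
  refine sum_congr rfl fun m _ => ?_
  rw [← Complex.exp_nat_mul]
  ring_nf

lemma dirichletKernel_zero {M : ℕ} (hM : M ≠ 0) : dirichletKernel M 0 = 1 := by
  simp [dirichletKernel_eq_geom_sum, hM]

lemma dirichletKernel_eq_div {M : ℕ} {x : ℝ} (hx0 : x ≠ 0) (hx2 : |x| < 2) :
    dirichletKernel M x = (M : ℂ)⁻¹ *
      ((Complex.exp (I * π * ((M * x : ℝ) : ℂ)) - 1) / (Complex.exp (I * π * x) - 1)) := by
  rw [dirichletKernel_eq_geom_sum, geom_sum_eq (exp_I_pi_mul_ne_one hx0 hx2), exp_I_pi_mul_pow]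

lemma dirichletKernel_two_mul_div_eq_zero {M : ℕ} {k : ℤ} (hk0 : k ≠ 0) (hkM : |k| < M) :
    dirichletKernel M (2 * k / M) = 0 := by
  have hM : (0 : ℝ) < M := by exact_mod_cast (abs_pos.mpr hk0).trans hkM
  have hx0 : (2 * k / M : ℝ) ≠ 0 := by positivity
  have hx2 : |(2 * k / M : ℝ)| < 2 := by
    rw [abs_div, abs_mul, abs_two, abs_of_pos hM, div_lt_iff₀ hM]
    have : (|k| : ℝ) < M := by exact_mod_cast hkM
    linarith
  have hMx : ((M * (2 * k / M) : ℝ) : ℂ) = 2 * k := by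
    rw [mul_div_cancel₀ _ hM.ne']
    push_cast
    ring
  rw [dirichletKernel_eq_div hx0 hx2, hMx,
    show I * π * (2 * k) = k * (2 * π * I) by ring, exp_int_mul_two_pi_mul_I]
  simp

lemma dirichletKernel_eq_zero_of_abs_eq {M : ℕ} {x : ℝ} (hM : 2 ≤ M) (hx : |x| = 2 / M) :
    dirichletKernel M x = 0 := by
  have hk : ∀ k : ℤ, |k| = 1 → dirichletKernel M (2 * k / M) = 0 := fun k hk =>
    dirichletKernel_two_mul_div_eq_zero (by rintro rfl; simp at hk) (by rw [hk]; omega)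
  rcases (abs_eq (by positivity)).mp hx with rfl | rfl
  · simpa using hk 1 rfl
  · simpa [neg_div] using hk (-1) rfl

lemma dirichletKernel_ne_zero_of_abs_lt {M : ℕ} {x : ℝ} (hM : 0 < M) (hx : |x| < 2 / M) :
    dirichletKernel M x ≠ 0 := by
  have hM' : (0 : ℝ) < M := by exact_mod_cast hM
  rcases eq_or_ne x 0 with rfl | hx0
  · rw [dirichletKernel_zero hM.ne']
    exact one_ne_zero
  have hMx : |(M * x : ℝ)| < 2 := by
    rwa [abs_mul, abs_of_pos hM', ← lt_div_iff₀' hM']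
  have hx2 : |x| < 2 := hx.trans_le (div_le_self zero_le_two (by exact_mod_cast hM))
  rw [dirichletKernel_eq_div hx0 hx2]
  refine mul_ne_zero (inv_ne_zero (by exact_mod_cast hM.ne')) (div_ne_zero ?_ ?_)
  · exact sub_ne_zero.mpr (exp_I_pi_mul_ne_one (mul_ne_zero hM'.ne' hx0) hMx)
  · exact sub_ne_zero.mpr (exp_I_pi_mul_ne_one hx0 hx2)

lemma sUPAFactor_azimuth_cut (M : ℕ) (φ η ϑ : ℝ) :
    sUPAFactor M φ ϑ η ϑ = (M : ℂ) ^ 2 * dirichletKernel M (Real.cos ϑ * Real.sin (φ - η)) *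
      dirichletKernel M (Real.sin ϑ * Real.cos ϑ * (1 - Real.cos (φ - η))) := by
  rw [sUPAFactor]
  ring_nf

lemma abs_sin_lt_of_abs_lt_arcsin {δ s : ℝ} (hδ : |δ| < arcsin s) :
    |Real.sin δ| < s := by
  have hδπ : |δ| < π / 2 := hδ.trans_le (arcsin_le_pi_div_two s)
  rw [abs_sin_eq_sin_abs_of_abs_le_pi (by linarith [pi_pos]),
    ← lt_arcsin_iff_sin_lt' ⟨by linarith [abs_nonneg δ, pi_pos], hδπ⟩]
  exact hδ

lemma one_sub_cos_le_abs_sin {δ : ℝ} (hδ : |δ| ≤ π / 2) : 1 - Real.cos δ ≤ |Real.sin δ| := by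
  have hcos : 0 ≤ Real.cos δ := cos_nonneg_of_mem_Icc (abs_le.mp hδ)
  calc 1 - Real.cos δ ≤ 1 - Real.cos δ ^ 2 := by nlinarith [Real.cos_le_one δ]
    _ = |Real.sin δ| ^ 2 := by rw [sq_abs, Real.sin_sq]
    _ ≤ |Real.sin δ| := pow_le_of_le_one (abs_nonneg _) (abs_sin_le_one δ) two_ne_zero

lemma abs_sin_mul_cos_mul_one_sub_cos_le {δ : ℝ} (ϑ : ℝ) (hδ : |δ| ≤ π / 2) :
    |Real.sin ϑ * Real.cos ϑ * (1 - Real.cos δ)| ≤ |Real.cos ϑ * Real.sin δ| := by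
  have h1 : 0 ≤ 1 - Real.cos δ := sub_nonneg.mpr (Real.cos_le_one δ)
  calc |Real.sin ϑ * Real.cos ϑ * (1 - Real.cos δ)|
      = |Real.cos ϑ| * (|Real.sin ϑ| * (1 - Real.cos δ)) := by
        rw [abs_mul, abs_mul, abs_of_nonneg h1]; ring
    _ ≤ |Real.cos ϑ| * (1 * |Real.sin δ|) := by
        gcongr
        · exact abs_sin_le_one ϑ
        · exact one_sub_cos_le_abs_sin hδ
    _ = |Real.cos ϑ * Real.sin δ| := by rw [one_mul, abs_mul]

lemma sUPAFactor_azimuth_cut_eq_zero {M : ℕ} {φ η ϑ : ℝ} (hM : 2 ≤ M)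
    (h : |Real.cos ϑ * Real.sin (φ - η)| = 2 / M) : sUPAFactor M φ ϑ η ϑ = 0 := by
  rw [sUPAFactor_azimuth_cut, dirichletKernel_eq_zero_of_abs_eq hM h, mul_zero, zero_mul]

lemma sUPAFactor_azimuth_cut_ne_zero {M : ℕ} {φ η ϑ : ℝ} (hM : 0 < M) (hδ : |φ - η| ≤ π / 2)
    (h : |Real.cos ϑ * Real.sin (φ - η)| < 2 / M) : sUPAFactor M φ ϑ η ϑ ≠ 0 := by
  rw [sUPAFactor_azimuth_cut]
  refine mul_ne_zero (mul_ne_zero (pow_ne_zero 2 (by exact_mod_cast hM.ne'))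
    (dirichletKernel_ne_zero_of_abs_lt hM h)) (dirichletKernel_ne_zero_of_abs_lt hM ?_)
  exact (abs_sin_mul_cos_mul_one_sub_cos_le ϑ hδ).trans_lt h

theorem sUPA_azimuth_beamwidth_general (M : ℕ) (hM : 3 ≤ M) (η : ℝ) (ϑ : ℝ)
    (hcos : 2 / (M : ℝ) < Real.cos ϑ) :
    sUPAFactor M (η + Real.arcsin (2 / (M * Real.cos ϑ))) ϑ η ϑ = 0 ∧
    sUPAFactor M (η - Real.arcsin (2 / (M * Real.cos ϑ))) ϑ η ϑ = 0 ∧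
    ∀ φ : ℝ, |φ - η| < Real.arcsin (2 / (M * Real.cos ϑ)) → sUPAFactor M φ ϑ η ϑ ≠ 0 := by
  have hM0 : (0 : ℝ) < M := by positivity
  have hc : 0 < Real.cos ϑ := (div_pos two_pos hM0).trans hcos
  set s := 2 / (M * Real.cos ϑ)
  have hs0 : 0 < s := by positivity
  have hs1 : s < 1 := by rw [div_lt_one (by positivity)]; rwa [div_lt_iff₀' hM0] at hcos
  have hcs : Real.cos ϑ * s = 2 / M := by
    simp only [s]
    field_simp
  have hsin_arcsin : Real.sin (arcsin s) = s := sin_arcsin (by linarith) hs1.le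
  refine ⟨sUPAFactor_azimuth_cut_eq_zero (by omega) ?_,
    sUPAFactor_azimuth_cut_eq_zero (by omega) ?_, fun φ hφ => ?_⟩
  · rw [add_sub_cancel_left, hsin_arcsin, hcs, abs_of_pos (by positivity)]
  · rw [sub_sub_cancel_left, Real.sin_neg, hsin_arcsin, mul_neg, hcs, abs_neg,
      abs_of_pos (by positivity)]
  refine sUPAFactor_azimuth_cut_ne_zero (by omega) (hφ.le.trans (arcsin_le_pi_div_two s)) ?_
  rw [abs_mul, abs_of_pos hc, ← hcs]
  exact mul_lt_mul_of_pos_left (abs_sin_lt_of_abs_lt_arcsin hφ) hc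

/-- Azimuth cut of the sUPA array factor: for `M ≥ 3` and `cos ϑ > 2/M`, the first nulls
around the peak `φ = η` lie exactly at `φ = η ± arcsin(2/(M cos ϑ))`, and there is no null
strictly inside; hence the null-to-null azimuth beamwidth equals `2 arcsin(2/(M cos ϑ))`. -/
theorem sUPA_azimuth_beamwidth (M : ℕ) (hM : 3 ≤ M) (η : ℝ) (ϑ : ℝ)
    (hϑ : ϑ ∈ Set.Ioo (-(Real.pi / 2)) (Real.pi / 2))
    (hcos : 2 / (M : ℝ) < Real.cos ϑ) :
    sUPAFactor M (η + Real.arcsin (2 / (M * Real.cos ϑ))) ϑ η ϑ = 0 ∧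
    sUPAFactor M (η - Real.arcsin (2 / (M * Real.cos ϑ))) ϑ η ϑ = 0 ∧
    ∀ φ : ℝ, |φ - η| < Real.arcsin (2 / (M * Real.cos ϑ)) → sUPAFactor M φ ϑ η ϑ ≠ 0 :=
  sUPA_azimuth_beamwidth_general M hM η ϑ hcos
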